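/- Let R_n denote the rational number Σ_{b=0}^{2^n−1} (T^[n](b) − (3^{m(b,n)}/2^n)·b). Then for every n ≥ 1, R_{n+1} = 2^(n−1) + 2·R_n. -/

import Mathlib

def T (N : ℕ) : ℕ := if N % 2 = 0 then N / 2 else (3 * N + 1) / 2

def m (b n : ℕ) : ℕ := ((Finset.range n).filter (fun k => Odd (T^[k] b))).card

/-!
The first `n` steps of `T` only depend on `b mod 2^n`, and shifting `b` by `2^n t` shifts
`T^[n] b` by `3^(m b n) t` without changing the parity pattern. So with `x = T^[n] b` and the
odd number `c = 3^(m b n)`, exactly one of `x` and `x + c = T^[n] (b + 2^n)` is odd, and one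
more step of `T` on both shows that the summands of `R_{n+1}` at `b` and at `b + 2^n` add up
to twice the summand of `R_n` at `b`, plus `1/2`. Summing over `b < 2^n` gives
`R_{n+1} = 2 R_n + 2^n / 2`.
-/

open Finset

lemma m_succ (b n : ℕ) : m b (n + 1) = m b n + if Odd (T^[n] b) then 1 else 0 := by
  unfold m
  rw [range_add_one, filter_insert]
  split
  · rw [card_insert_of_notMem (by simp)]
  · simp

lemma T_add_two_mul (a s : ℕ) : T (a + 2 * s) = T a + (if Odd a then 3 else 1) * s := by
  simp only [T, Nat.odd_iff]
  split_ifs <;> omega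

lemma iterate_T_add_two_pow_mul (n b t : ℕ) :
    T^[n] (b + 2 ^ n * t) = T^[n] b + 3 ^ m b n * t ∧ m (b + 2 ^ n * t) n = m b n := by
  induction n generalizing t with
  | zero => simp [m]
  | succ n ih =>
    have hshift : b + 2 ^ (n + 1) * t = b + 2 ^ n * (2 * t) := by ring
    obtain ⟨hT, hm⟩ := ih (2 * t)
    have hT' : T^[n] (b + 2 ^ (n + 1) * t) = T^[n] b + 2 * (3 ^ m b n * t) := by
      rw [hshift, hT]; ring
    rw [← hshift] at hm
    have hparity : Odd (T^[n] b + 2 * (3 ^ m b n * t)) ↔ Odd (T^[n] b) := by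
      simp [Nat.odd_add]
    refine ⟨?_, ?_⟩
    · rw [Function.iterate_succ_apply', Function.iterate_succ_apply', hT', T_add_two_mul, m_succ]
      split <;> ring
    · simp only [m_succ, hm, hT', hparity]

lemma cast_T (y : ℕ) :
    (T y : ℚ) = if Odd y then (3 * y + 1 : ℚ) / 2 else (y : ℚ) / 2 := by
  obtain ⟨k, rfl | rfl⟩ := Nat.even_or_odd' y
  · simp [T]
  · have h : T (2 * k + 1) = 3 * k + 2 := by unfold T; split_ifs <;> omega
    simp [h]
    ring

def rSummand (n b : ℕ) : ℚ := T^[n] b - 3 ^ m b n / 2 ^ n * b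

lemma rSummand_succ_add_succ_two_pow_add (n b : ℕ) :
    rSummand (n + 1) b + rSummand (n + 1) (2 ^ n + b) = 2 * rSummand n b + 1 / 2 := by
  obtain ⟨hT, hm⟩ := iterate_T_add_two_pow_mul n b 1
  simp only [mul_one, add_comm b] at hT hm
  have hflip : Odd (T^[n] b + 3 ^ m b n) ↔ ¬ Odd (T^[n] b) := by
    have hc : ¬ Even (3 ^ m b n) := Nat.not_even_iff_odd.mpr (Odd.pow (by decide))
    simp [Nat.odd_add, hc]
  unfold rSummand
  rw [Function.iterate_succ_apply', Function.iterate_succ_apply', hT, m_succ, m_succ, hm,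
    hT, cast_T, cast_T]
  by_cases hx : Odd (T^[n] b) <;>
    simp only [hx, hflip, not_true, not_false_eq_true, if_true, if_false] <;>
    push_cast <;> field_simp <;> ring

lemma sum_rSummand_succ (n : ℕ) :
    ∑ b ∈ range (2 ^ (n + 1)), rSummand (n + 1) b
      = 2 ^ n / 2 + 2 * ∑ b ∈ range (2 ^ n), rSummand n b := by
  rw [pow_succ, mul_two, sum_range_add, ← sum_add_distrib]
  simp only [rSummand_succ_add_succ_two_pow_add, sum_add_distrib, ← mul_sum, sum_const,
    card_range, nsmul_eq_mul]
  push_cast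
  ring

theorem stmt9 : ∀ n ≥ 1,
    ∑ b ∈ Finset.range (2 ^ (n + 1)), ((T^[n + 1] b : ℚ) - (3 : ℚ) ^ m b (n + 1) / 2 ^ (n + 1) * b)
      = 2 ^ (n - 1) +
        2 * ∑ b ∈ Finset.range (2 ^ n), ((T^[n] b : ℚ) - (3 : ℚ) ^ m b n / 2 ^ n * b) := by
  intro n hn
  rw [pow_sub₀ _ two_ne_zero hn, pow_one]
  exact sum_rSummand_succ n
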